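/- arXiv:2006.11899 — 6 statements merged into one kernel-verified Lean document; each statement's English description precedes it below -/
import Mathlib

section
/- Let μ be a probability measure on ℝ and let w ∈ ℂ with Im w > 0. Then the reciprocal Cauchy transform F_μ(w) = 1/G_μ(w) satisfies Im F_μ(w) ≥ Im(w). -/
/-!
With `y = Im w`, the imaginary part of `G_μ(w)` is `-y ∫ |w - x|⁻² dμ`, while
`|G_μ(w)|² ≤ (∫ |w - x|⁻¹ dμ)² ≤ ∫ |w - x|⁻² dμ` by the triangle inequality and Jensen's
inequality for the probability measure `μ`. Hence `Im F_μ(w) = -Im G_μ(w) / |G_μ(w)|² ≥ y`.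
-/

open MeasureTheory

/-- The Cauchy transform of a measure `μ` on `ℝ`: `G_μ(z) = ∫ (z - x)⁻¹ dμ(x)`. -/
noncomputable def cauchyTransform (μ : Measure ℝ) (z : ℂ) : ℂ :=
  ∫ x, (z - (x : ℂ))⁻¹ ∂μ

section Integral

variable {Ω : Type*} [MeasurableSpace Ω] {μ : Measure Ω}

lemma integral_pos_of_forall_pos [NeZero μ] {f : Ω → ℝ} (hf : ∀ ω, 0 < f ω)
    (hfi : Integrable f μ) : 0 < ∫ ω, f ω ∂μ := by
  rw [integral_pos_iff_support_of_nonneg (fun ω ↦ (hf ω).le) hfi,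
    Function.support_eq_univ fun ω ↦ (hf ω).ne']
  exact Measure.measure_univ_pos.2 (NeZero.ne μ)

lemma sq_integral_le_integral_sq [IsProbabilityMeasure μ] {X : Ω → ℝ} (hX : MemLp X 2 μ) :
    (∫ ω, X ω ∂μ) ^ 2 ≤ ∫ ω, X ω ^ 2 ∂μ := by
  have := ProbabilityTheory.variance_nonneg X μ
  rw [ProbabilityTheory.variance_eq_sub hX] at this
  simpa using this

lemma sq_norm_integral_le_integral_sq_norm {E : Type*} [NormedAddCommGroup E] [NormedSpace ℝ E]
    [IsProbabilityMeasure μ] {f : Ω → E} (hf : MemLp f 2 μ) :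
    ‖∫ ω, f ω ∂μ‖ ^ 2 ≤ ∫ ω, ‖f ω‖ ^ 2 ∂μ :=
  (pow_le_pow_left₀ (norm_nonneg _) (norm_integral_le_integral_norm f) 2).trans
    (sq_integral_le_integral_sq hf.norm)

end Integral

lemma Complex.inv_im_eq_neg_im_mul_sq_norm_inv (z : ℂ) : z⁻¹.im = -z.im * ‖z⁻¹‖ ^ 2 := by
  rw [Complex.inv_im, Complex.sq_norm, map_inv₀, div_eq_mul_inv]

section CauchyKernel

variable {w : ℂ}

lemma sub_ofReal_ne_zero (hw : 0 < w.im) (x : ℝ) : w - x ≠ 0 :=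
  fun h ↦ hw.ne' (by simpa using congrArg Complex.im h)

lemma norm_inv_sub_ofReal_le (hw : 0 < w.im) (x : ℝ) : ‖(w - x)⁻¹‖ ≤ w.im⁻¹ := by
  rw [norm_inv]
  refine inv_anti₀ hw ?_
  simpa using Complex.im_le_norm (w - x)

lemma memLp_inv_sub_ofReal (μ : Measure ℝ) [IsFiniteMeasure μ] (hw : 0 < w.im) (p : ENNReal) :
    MemLp (fun x : ℝ ↦ (w - x)⁻¹) p μ :=
  .of_bound (by fun_prop) _ (.of_forall (norm_inv_sub_ofReal_le hw))

lemma cauchyTransform_im (μ : Measure ℝ) [IsFiniteMeasure μ] (hw : 0 < w.im) :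
    (cauchyTransform μ w).im = -w.im * ∫ x, ‖(w - x)⁻¹‖ ^ 2 ∂μ := by
  rw [cauchyTransform, ← integral_const_mul, ← RCLike.im_eq_complex_im,
    ← integral_im ((memLp_inv_sub_ofReal μ hw 1).integrable le_rfl)]
  simp_rw [RCLike.im_eq_complex_im, Complex.inv_im_eq_neg_im_mul_sq_norm_inv]
  simp

lemma normSq_cauchyTransform_le (μ : Measure ℝ) [IsProbabilityMeasure μ] (hw : 0 < w.im) :
    Complex.normSq (cauchyTransform μ w) ≤ ∫ x, ‖(w - x)⁻¹‖ ^ 2 ∂μ := by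
  rw [Complex.normSq_eq_norm_sq]
  exact sq_norm_integral_le_integral_sq_norm (memLp_inv_sub_ofReal μ hw 2)

lemma cauchyTransform_im_neg (μ : Measure ℝ) [IsFiniteMeasure μ] [NeZero μ] (hw : 0 < w.im) :
    (cauchyTransform μ w).im < 0 := by
  rw [cauchyTransform_im μ hw, neg_mul, neg_lt_zero]
  refine mul_pos hw (integral_pos_of_forall_pos (fun x ↦ ?_) ?_)
  · exact pow_pos (norm_pos_iff.2 (inv_ne_zero (sub_ofReal_ne_zero hw x))) 2
  · exact (memLp_inv_sub_ofReal μ hw 2).integrable_norm_pow two_ne_zero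

end CauchyKernel

/-- For a probability measure `μ` and `Im w > 0`, the reciprocal Cauchy transform
`F_μ(w) = 1/G_μ(w)` satisfies `Im F_μ(w) ≥ Im w`. -/
theorem im_inv_cauchyTransform_ge (μ : Measure ℝ) [IsProbabilityMeasure μ]
    (w : ℂ) (hw : 0 < w.im) :
    w.im ≤ ((cauchyTransform μ w)⁻¹).im := by
  have hG : cauchyTransform μ w ≠ 0 := fun h ↦ by
    simpa [h] using cauchyTransform_im_neg μ hw
  rw [Complex.inv_im, cauchyTransform_im μ hw, le_div_iff₀ (Complex.normSq_pos.2 hG),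
    neg_mul, neg_neg]
  exact mul_le_mul_of_nonneg_left (normSq_cauchyTransform_le μ hw) hw.le
end

section
/- Let t > 0. For every v ∈ ℂ with Im v > 0, one has Im(√(v² − 4t)) ≤ √(Im(v)² + 4t), where the left-hand side uses the principal branch of the complex square root and the right-hand side is the real square root. -/
/-! Writing `s = √w`, the identities `s² = w` and `|s|² = |w|` give `(Im s)² = (|w| - Re w)/2`,
with no reference to the branch. For `w = v² - 4t` the triangle inequality
`|w| ≤ |v|² + 4t = (Re v)² + (Im v)² + 4t` together with `Re w = (Re v)² - (Im v)² - 4t`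
bounds this by `(Im v)² + 4t`. -/

namespace Complex

theorem im_sq_eq_of_sq_eq {s w : ℂ} (h : s ^ 2 = w) : s.im ^ 2 = (‖w‖ - w.re) / 2 := by
  have hnorm : s.re ^ 2 + s.im ^ 2 = ‖w‖ := by
    rw [← h, norm_pow, Complex.sq_norm, normSq_apply]
    ring
  have hre : s.re ^ 2 - s.im ^ 2 = w.re := by
    rw [← h, pow_two s, mul_re]
    ring
  linarith

theorem im_cpow_one_half_sq (w : ℂ) : (w ^ (1 / 2 : ℂ)).im ^ 2 = (‖w‖ - w.re) / 2 :=
  im_sq_eq_of_sq_eq (by simp)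

theorem norm_sq_sub_ofReal_le (v : ℂ) {c : ℝ} (hc : 0 ≤ c) :
    ‖v ^ 2 - c‖ ≤ v.re ^ 2 + v.im ^ 2 + c := by
  calc ‖v ^ 2 - c‖ ≤ ‖v ^ 2‖ + ‖(c : ℂ)‖ := norm_sub_le _ _
    _ = v.re ^ 2 + v.im ^ 2 + c := by
      rw [norm_pow, Complex.sq_norm, normSq_apply, norm_real, Real.norm_of_nonneg hc]
      ring

end Complex

theorem im_csqrt_le_general (t : ℝ) (ht : 0 < t) (v : ℂ) :
    ((v ^ 2 - 4 * (t : ℂ)) ^ (1 / 2 : ℂ)).im ≤ Real.sqrt (v.im ^ 2 + 4 * t) := by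
  apply Real.le_sqrt_of_sq_le
  have hnorm := Complex.norm_sq_sub_ofReal_le v (by positivity : (0 : ℝ) ≤ 4 * t)
  have hre : (v ^ 2 - 4 * (t : ℂ)).re = v.re ^ 2 - v.im ^ 2 - 4 * t := by
    simp [sq]
  rw [Complex.im_cpow_one_half_sq, hre]
  push_cast at hnorm
  linarith

/-- For `t > 0` and `Im v > 0`, `Im √(v² − 4t) ≤ √(Im(v)² + 4t)`, where the left-hand side
uses the principal branch of the complex square root. -/
theorem im_csqrt_le (t : ℝ) (ht : 0 < t) (v : ℂ) (hv : 0 < v.im) :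
    ((v ^ 2 - 4 * (t : ℂ)) ^ (1 / 2 : ℂ)).im ≤ Real.sqrt (v.im ^ 2 + 4 * t) :=
  im_csqrt_le_general t ht v
end

section
/- Let t > 0 and γ > 2√t, let μ and ν be probability measures on ℝ, and let z ∈ ℂ with Im z > γ. Suppose w, ŵ ∈ ℂ satisfy Im w > Im(z)/2, Im ŵ > Im(z)/2, w = z + t·G_μ(w) and ŵ = z + t·G_ν(ŵ). Then |ŵ − w| ≤ (t·γ²/(γ² − 4t)) · |G_ν(w) − G_μ(w)|. -/
open MeasureTheory

/-!
Subtracting the two fixed-point equations gives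
`ŵ - w = t (G_ν(ŵ) - G_ν(w)) + t (G_ν(w) - G_μ(w))`.
By the resolvent identity `|G_ν(ŵ) - G_ν(w)| ≤ |ŵ - w| / (Im ŵ · Im w) ≤ (4 / γ²) |ŵ - w|`,
and `t · 4 / γ² < 1`, so the first term can be absorbed into the left-hand side.
-/

lemma sub_ofReal_ne_zero_of_im_pos {c : ℂ} (hc : 0 < c.im) (x : ℝ) : c - (x : ℂ) ≠ 0 := by
  intro h
  have := congrArg Complex.im h
  simp only [Complex.sub_im, Complex.ofReal_im, sub_zero, Complex.zero_im] at this
  linarith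

lemma norm_inv_sub_ofReal_le_s11 {c : ℂ} (hc : 0 < c.im) (x : ℝ) :
    ‖(c - (x : ℂ))⁻¹‖ ≤ c.im⁻¹ := by
  rw [norm_inv]
  refine inv_anti₀ hc ?_
  calc c.im = (c - (x : ℂ)).im := by simp
    _ ≤ ‖c - (x : ℂ)‖ := (le_abs_self _).trans (Complex.abs_im_le_norm _)

lemma integrable_inv_sub_ofReal {c : ℂ} (hc : 0 < c.im) (μ : Measure ℝ) [IsFiniteMeasure μ] :
    Integrable (fun x : ℝ => (c - (x : ℂ))⁻¹) μ :=
  Integrable.mono' (integrable_const c.im⁻¹)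
    ((continuous_const.sub Complex.continuous_ofReal).inv₀
      (sub_ofReal_ne_zero_of_im_pos hc)).aestronglyMeasurable
    (Filter.Eventually.of_forall (norm_inv_sub_ofReal_le_s11 hc))

lemma cauchyTransform_sub_cauchyTransform (μ : Measure ℝ) [IsFiniteMeasure μ] {a b : ℂ}
    (ha : 0 < a.im) (hb : 0 < b.im) :
    cauchyTransform μ a - cauchyTransform μ b
      = ∫ x, (b - a) * ((a - (x : ℂ))⁻¹ * (b - (x : ℂ))⁻¹) ∂μ := by
  rw [cauchyTransform, cauchyTransform,
    ← integral_sub (integrable_inv_sub_ofReal ha μ) (integrable_inv_sub_ofReal hb μ)]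
  congr 1 with x
  have := sub_ofReal_ne_zero_of_im_pos ha x
  have := sub_ofReal_ne_zero_of_im_pos hb x
  field_simp
  ring

lemma norm_cauchyTransform_sub_le (μ : Measure ℝ) [IsProbabilityMeasure μ] {a b : ℂ}
    (ha : 0 < a.im) (hb : 0 < b.im) :
    ‖cauchyTransform μ a - cauchyTransform μ b‖ ≤ ‖a - b‖ / (a.im * b.im) := by
  rw [cauchyTransform_sub_cauchyTransform μ ha hb]
  have hbound : ∀ x : ℝ, ‖(b - a) * ((a - (x : ℂ))⁻¹ * (b - (x : ℂ))⁻¹)‖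
      ≤ ‖a - b‖ / (a.im * b.im) := fun x ↦ by
    rw [norm_mul, norm_mul, norm_sub_rev, div_eq_mul_inv, mul_inv]
    gcongr
    exacts [norm_inv_sub_ofReal_le_s11 ha x, norm_inv_sub_ofReal_le_s11 hb x]
  simpa using norm_integral_le_of_norm_le_const (μ := μ) (Filter.Eventually.of_forall hbound)

lemma le_div_one_sub_mul_of_le_mul_add {A D t L : ℝ} (htL : t * L < 1)
    (hA : A ≤ t * L * A + t * D) : A ≤ t / (1 - t * L) * D := by
  rw [div_mul_eq_mul_div, le_div_iff₀ (by linarith)]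
  linarith

lemma norm_sub_le_of_subordination {t : ℝ} (ht : 0 ≤ t) {μ ν : Measure ℝ} {z w wh : ℂ}
    (heqw : w = z + (t : ℂ) * cauchyTransform μ w)
    (heqwh : wh = z + (t : ℂ) * cauchyTransform ν wh) :
    ‖wh - w‖ ≤ t * ‖cauchyTransform ν wh - cauchyTransform ν w‖
      + t * ‖cauchyTransform ν w - cauchyTransform μ w‖ := by
  have hsplit : wh - w = (t : ℂ) * (cauchyTransform ν wh - cauchyTransform ν w)
      + (t : ℂ) * (cauchyTransform ν w - cauchyTransform μ w) := by
    linear_combination heqwh - heqw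
  rw [hsplit]
  refine (norm_add_le _ _).trans_eq ?_
  simp only [norm_mul, Complex.norm_real, Real.norm_of_nonneg ht]

/-- Deterministic stability estimate: if `w` and `wh` are fixed points of the subordination
equations for `μ` and `ν` respectively, then
`|wh − w| ≤ (t γ²/(γ² − 4t)) |G_ν(w) − G_μ(w)|`. -/
theorem subordination_stability (t γ : ℝ) (ht : 0 < t) (hγ : 2 * Real.sqrt t < γ)
    (μ ν : Measure ℝ) [IsProbabilityMeasure μ] [IsProbabilityMeasure ν]
    (z : ℂ) (hz : γ < z.im) (w wh : ℂ)
    (hw : z.im / 2 < w.im) (hwh : z.im / 2 < wh.im)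
    (heqw : w = z + (t : ℂ) * cauchyTransform μ w)
    (heqwh : wh = z + (t : ℂ) * cauchyTransform ν wh) :
    ‖wh - w‖ ≤ (t * γ ^ 2 / (γ ^ 2 - 4 * t)) *
      ‖cauchyTransform ν w - cauchyTransform μ w‖ := by
  have hγ0 : 0 < γ := (mul_nonneg zero_le_two (Real.sqrt_nonneg t)).trans_lt hγ
  have h4t : 4 * t < γ ^ 2 := by nlinarith [Real.sq_sqrt ht.le, Real.sqrt_nonneg t]
  have hwim : 0 < w.im := by linarith
  have hwhim : 0 < wh.im := by linarith
  have hLip : ‖cauchyTransform ν wh - cauchyTransform ν w‖ ≤ 4 / γ ^ 2 * ‖wh - w‖ := by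
    refine (norm_cauchyTransform_sub_le ν hwhim hwim).trans ?_
    rw [div_eq_inv_mul]
    gcongr
    rw [inv_le_comm₀ (by positivity) (by positivity), inv_div]
    nlinarith
  have hA : ‖wh - w‖ ≤ t * (4 / γ ^ 2) * ‖wh - w‖
      + t * ‖cauchyTransform ν w - cauchyTransform μ w‖ := by
    refine (norm_sub_le_of_subordination ht.le heqw heqwh).trans ?_
    rw [mul_assoc]
    gcongr
  have htL : t * (4 / γ ^ 2) < 1 := by
    rw [mul_div_assoc', div_lt_one (by positivity)]
    linarith
  have hcoef : t / (1 - t * (4 / γ ^ 2)) = t * γ ^ 2 / (γ ^ 2 - 4 * t) := by field_simp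
  rw [← hcoef]
  exact le_div_one_sub_mul_of_le_mul_add htL hA
end

section
/- Let t > 0 and γ > 2√t, let μ₀ and ν be probability measures on ℝ, let x ∈ ℝ and set z = x + iγ. Suppose w ∈ ℂ satisfies the subordination relations w = z + t·G_ν(w) and G_{μ₀}(z) = G_ν(w). Then the density of μ₀ ∗ 𝒞_γ at x equals (1/(πt))·(γ − Im w), i.e. ∫_ℝ γ/(π((x − y)² + γ²)) dμ₀(y) = (γ − Im w)/(πt). -/
/-!
Taking imaginary parts in `w = z + t G_ν(w)` gives `Im w = γ + t Im G_ν(w) = γ + t Im G_{μ₀}(z)`,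
and `-Im G_{μ₀}(x + iγ) / π` is the Poisson integral of `μ₀`, i.e. the density of `μ₀ ∗ 𝒞_γ`
at `x`.
-/

open MeasureTheory

namespace Complex

lemma inv_sub_ofReal_im (z : ℂ) (y : ℝ) :
    ((z - y)⁻¹).im = -z.im / ((z.re - y) ^ 2 + z.im ^ 2) := by
  rw [inv_im, normSq_apply]
  simp only [sub_re, sub_im, ofReal_re, ofReal_im, sub_zero]
  ring

lemma norm_inv_sub_ofReal_le {z : ℂ} (hz : z.im ≠ 0) (y : ℝ) : ‖(z - y)⁻¹‖ ≤ |z.im|⁻¹ := by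
  rw [norm_inv]
  refine inv_anti₀ (abs_pos.2 hz) ?_
  simpa using abs_im_le_norm (z - y)

end Complex

section CauchyTransform

variable (μ : Measure ℝ) [IsFiniteMeasure μ] {z : ℂ}

lemma integrable_inv_sub_ofReal_s13 (hz : z.im ≠ 0) : Integrable (fun y : ℝ => (z - y)⁻¹) μ :=
  Integrable.of_bound (by fun_prop) _ (ae_of_all _ (Complex.norm_inv_sub_ofReal_le hz))

lemma cauchyTransform_im_s13 (hz : z.im ≠ 0) :
    (cauchyTransform μ z).im =
      -Real.pi * ∫ y, z.im / (Real.pi * ((z.re - y) ^ 2 + z.im ^ 2)) ∂μ := by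
  rw [cauchyTransform, ← Complex.imCLM_apply, ← (Complex.imCLM).integral_comp_comm
    (integrable_inv_sub_ofReal_s13 μ hz), ← integral_const_mul]
  refine integral_congr_ae (ae_of_all _ fun y => ?_)
  simp only [Complex.imCLM_apply, Complex.inv_sub_ofReal_im]
  field_simp

end CauchyTransform

theorem deconvolution_identity_general (t γ : ℝ) (ht : 0 < t) (hγ : 2 * Real.sqrt t < γ)
    (μ₀ ν : Measure ℝ) [IsProbabilityMeasure μ₀]
    (x : ℝ) (w : ℂ)
    (hw : w = ((x : ℂ) + γ * Complex.I) + (t : ℂ) * cauchyTransform ν w)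
    (hsub : cauchyTransform μ₀ ((x : ℂ) + γ * Complex.I) = cauchyTransform ν w) :
    ∫ y, γ / (Real.pi * ((x - y) ^ 2 + γ ^ 2)) ∂μ₀ = (γ - w.im) / (Real.pi * t) := by
  have hγ0 : γ ≠ 0 := (lt_of_le_of_lt (by positivity) hγ).ne'
  have hw_im : w.im = γ + t * (cauchyTransform μ₀ ((x : ℂ) + γ * Complex.I)).im := by
    conv_lhs => rw [hw]
    simp [hsub]
  have hG := cauchyTransform_im_s13 μ₀ (z := (x : ℂ) + γ * Complex.I) (by simpa using hγ0)
  simp only [Complex.add_re, Complex.add_im, Complex.ofReal_re, Complex.ofReal_im,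
    Complex.mul_re, Complex.mul_im, Complex.I_re, Complex.I_im, mul_zero, mul_one, sub_zero,
    zero_add, add_zero] at hG
  rw [hw_im, hG]
  field_simp
  ring

/-- Key deconvolution identity: if `w` satisfies the subordination relations
`w = z + t G_ν(w)` and `G_{μ₀}(z) = G_ν(w)` at `z = x + iγ` with `γ > 2√t`, then the density
of `μ₀ ∗ 𝒞_γ` at `x` equals `(γ − Im w)/(π t)`. -/
theorem deconvolution_identity (t γ : ℝ) (ht : 0 < t) (hγ : 2 * Real.sqrt t < γ)
    (μ₀ ν : Measure ℝ) [IsProbabilityMeasure μ₀] [IsProbabilityMeasure ν]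
    (x : ℝ) (w : ℂ)
    (hw : w = ((x : ℂ) + γ * Complex.I) + (t : ℂ) * cauchyTransform ν w)
    (hsub : cauchyTransform μ₀ ((x : ℂ) + γ * Complex.I) = cauchyTransform ν w) :
    ∫ y, γ / (Real.pi * ((x - y) ^ 2 + γ ^ 2)) ∂μ₀ = (γ - w.im) / (Real.pi * t) :=
  deconvolution_identity_general t γ ht hγ μ₀ ν x w hw hsub
end

section
/- Let t > 0 and γ > 2√t, let z ∈ ℂ with Im z ≥ γ/2, and let μ₁, μ₂ be probability measures on ℝ. Suppose g₁, g₂ ∈ ℂ satisfy Im g₁ ≤ 0, Im g₂ ≤ 0, and the self-consistent equations g₁ = ∫_ℝ (z − t·g₁ − x)⁻¹ dμ₁(x) and g₂ = ∫_ℝ (z − t·g₂ − x)⁻¹ dμ₂(x). Then |g₁ − g₂| ≤ (γ²/(γ² − 4t)) · | ∫_ℝ (z − t·g₂ − x)⁻¹ dμ₁(x) − ∫_ℝ (z − t·g₂ − x)⁻¹ dμ₂(x) |. -/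
/-!
Write `wᵢ = z - t gᵢ` and `G_μ(w) = ∫ (w - x)⁻¹ dμ`. Since `Im wᵢ ≥ Im z ≥ γ/2`, every resolvent
`(wᵢ - x)⁻¹` has norm at most `2/γ`, so by the resolvent identity `G_μ` of a probability measure is
`(2/γ)²`-Lipschitz on `{Im w ≥ γ/2}`. Splitting
`g₁ - g₂ = (G_{μ₁}(w₁) - G_{μ₁}(w₂)) + (G_{μ₁}(w₂) - G_{μ₂}(w₂))` therefore gives
`‖g₁ - g₂‖ ≤ (4t/γ²) ‖g₁ - g₂‖ + ‖G_{μ₁}(w₂) - G_{μ₂}(w₂)‖`, and `4t/γ² < 1` lets the first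
term be absorbed.
-/

open MeasureTheory

namespace Complex

theorem norm_inv_sub_ofReal_le_s16 {c : ℝ} (hc : 0 < c) {w : ℂ} (hw : c ≤ w.im) (x : ℝ) :
    ‖(w - x)⁻¹‖ ≤ c⁻¹ := by
  rw [norm_inv]
  refine inv_anti₀ hc (hw.trans ?_)
  simpa using im_le_norm (w - x)

theorem sub_ofReal_ne_zero_of_im_ne_zero {w : ℂ} (hw : w.im ≠ 0) (x : ℝ) : w - x ≠ 0 :=
  sub_ne_zero.mpr fun h => hw (by simp [h])

theorem integrable_inv_sub_ofReal (μ : Measure ℝ) [IsFiniteMeasure μ] {c : ℝ} (hc : 0 < c)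
    {w : ℂ} (hw : c ≤ w.im) : Integrable (fun x : ℝ => (w - x)⁻¹) μ := by
  have hcont : Continuous fun x : ℝ => (w - x)⁻¹ :=
    (continuous_const.sub continuous_ofReal).inv₀
      (sub_ofReal_ne_zero_of_im_ne_zero (hc.trans_le hw).ne')
  exact .of_bound hcont.aestronglyMeasurable c⁻¹
    (.of_forall (norm_inv_sub_ofReal_le_s16 hc hw))

theorem norm_integral_inv_sub_ofReal_sub_le (μ : Measure ℝ) [IsProbabilityMeasure μ] {c : ℝ}
    (hc : 0 < c) {w₁ w₂ : ℂ} (h₁ : c ≤ w₁.im) (h₂ : c ≤ w₂.im) :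
    ‖(∫ x, (w₁ - x)⁻¹ ∂μ) - ∫ x, (w₂ - x)⁻¹ ∂μ‖ ≤ ‖w₁ - w₂‖ / c ^ 2 := by
  have hresolvent : ∀ x : ℝ,
      ‖(w₁ - x)⁻¹ - (w₂ - x)⁻¹‖ ≤ c⁻¹ * ‖w₁ - w₂‖ * c⁻¹ := fun x => by
    rw [inv_sub_inv' (sub_ofReal_ne_zero_of_im_ne_zero (hc.trans_le h₁).ne' x)
        (sub_ofReal_ne_zero_of_im_ne_zero (hc.trans_le h₂).ne' x),
      sub_sub_sub_cancel_right, norm_mul, norm_mul, norm_sub_rev w₂]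
    gcongr
    · exact norm_inv_sub_ofReal_le_s16 hc h₁ x
    · exact norm_inv_sub_ofReal_le_s16 hc h₂ x
  rw [← integral_sub (integrable_inv_sub_ofReal μ hc h₁) (integrable_inv_sub_ofReal μ hc h₂)]
  calc ‖∫ x, ((w₁ - x)⁻¹ - (w₂ - x)⁻¹) ∂μ‖ ≤ c⁻¹ * ‖w₁ - w₂‖ * c⁻¹ := by
        simpa using norm_integral_le_of_norm_le_const (μ := μ) (.of_forall hresolvent)
    _ = ‖w₁ - w₂‖ / c ^ 2 := by field_simp

end Complex

theorem le_div_one_sub_of_le_mul_add {a b κ : ℝ} (hκ : κ < 1) (h : a ≤ κ * a + b) :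
    a ≤ b / (1 - κ) := by
  rw [le_div_iff₀ (sub_pos.mpr hκ)]
  linarith

theorem selfconsistent_stability_general (t γ : ℝ) (ht : 0 < t) (hγ : 2 * Real.sqrt t < γ)
    (z : ℂ) (hz : γ / 2 ≤ z.im)
    (μ₁ μ₂ : Measure ℝ) [IsProbabilityMeasure μ₁]
    (g₁ g₂ : ℂ) (hg₁ : g₁.im ≤ 0) (hg₂ : g₂.im ≤ 0)
    (e₁ : g₁ = ∫ x, (z - (t : ℂ) * g₁ - (x : ℂ))⁻¹ ∂μ₁)
    (e₂ : g₂ = ∫ x, (z - (t : ℂ) * g₂ - (x : ℂ))⁻¹ ∂μ₂) :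
    ‖g₁ - g₂‖ ≤ (γ ^ 2 / (γ ^ 2 - 4 * t)) *
      ‖(∫ x, (z - (t : ℂ) * g₂ - (x : ℂ))⁻¹ ∂μ₁) -
        ∫ x, (z - (t : ℂ) * g₂ - (x : ℂ))⁻¹ ∂μ₂‖ := by
  have hγ₀ : 0 < γ := (by positivity : 0 ≤ 2 * Real.sqrt t).trans_lt hγ
  have hcontraction : 4 * t / γ ^ 2 < 1 := by
    rw [div_lt_one (by positivity)]
    nlinarith [Real.sq_sqrt ht.le, Real.sqrt_nonneg t]
  have him : ∀ g : ℂ, g.im ≤ 0 → γ / 2 ≤ (z - t * g).im := fun g hg => by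
    simp only [Complex.sub_im, Complex.im_ofReal_mul]
    nlinarith
  have hsplit : g₁ - g₂ = ((∫ x, (z - t * g₁ - x)⁻¹ ∂μ₁) - ∫ x, (z - t * g₂ - x)⁻¹ ∂μ₁) +
      ((∫ x, (z - t * g₂ - x)⁻¹ ∂μ₁) - ∫ x, (z - t * g₂ - x)⁻¹ ∂μ₂) := by
    rw [← e₁, ← e₂]
    ring
  have hlipschitz : ‖(∫ x, (z - t * g₁ - x)⁻¹ ∂μ₁) - ∫ x, (z - t * g₂ - x)⁻¹ ∂μ₁‖ ≤
      4 * t / γ ^ 2 * ‖g₁ - g₂‖ := by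
    refine (Complex.norm_integral_inv_sub_ofReal_sub_le μ₁ (by positivity)
      (him g₁ hg₁) (him g₂ hg₂)).trans_eq ?_
    rw [show z - t * g₁ - (z - t * g₂) = -(t * (g₁ - g₂)) by ring, norm_neg, norm_mul,
      Complex.norm_real, Real.norm_of_nonneg ht.le]
    field_simp
    ring
  have hmain := le_div_one_sub_of_le_mul_add hcontraction <|
    (hsplit ▸ norm_add_le _ _).trans (add_le_add_left hlipschitz _)
  refine hmain.trans_eq ?_
  field_simp

/-- Deterministic core of the fluctuation estimate for `A₃ⁿ`: if `g₁, g₂` with nonpositive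
imaginary parts satisfy the self-consistent equations `gᵢ = ∫ (z − t gᵢ − x)⁻¹ dμᵢ(x)` for
`Im z ≥ γ/2` with `γ > 2√t`, then
`|g₁ − g₂| ≤ (γ²/(γ² − 4t)) |∫ (z − t g₂ − x)⁻¹ dμ₁ − ∫ (z − t g₂ − x)⁻¹ dμ₂|`. -/
theorem selfconsistent_stability (t γ : ℝ) (ht : 0 < t) (hγ : 2 * Real.sqrt t < γ)
    (z : ℂ) (hz : γ / 2 ≤ z.im)
    (μ₁ μ₂ : Measure ℝ) [IsProbabilityMeasure μ₁] [IsProbabilityMeasure μ₂]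
    (g₁ g₂ : ℂ) (hg₁ : g₁.im ≤ 0) (hg₂ : g₂.im ≤ 0)
    (e₁ : g₁ = ∫ x, (z - (t : ℂ) * g₁ - (x : ℂ))⁻¹ ∂μ₁)
    (e₂ : g₂ = ∫ x, (z - (t : ℂ) * g₂ - (x : ℂ))⁻¹ ∂μ₂) :
    ‖g₁ - g₂‖ ≤ (γ ^ 2 / (γ ^ 2 - 4 * t)) *
      ‖(∫ x, (z - (t : ℂ) * g₂ - (x : ℂ))⁻¹ ∂μ₁) -
        ∫ x, (z - (t : ℂ) * g₂ - (x : ℂ))⁻¹ ∂μ₂‖ :=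
  selfconsistent_stability_general t γ ht hγ z hz μ₁ μ₂ g₁ g₂ hg₁ hg₂ e₁ e₂
end

section
/- Let μ be a probability measure on ℝ, let γ > 0 and let κ > γ. Then ∫_{{x ∈ ℝ : |x| > κ}} ( ∫_ℝ ((x − λ)² + γ²/4)⁻¹ dμ(λ) ) dx ≤ 4/κ + (3π/γ) · μ({λ ∈ ℝ : |λ| > κ/2}). -/
/-!
Swap the integrals (Tonelli) and bound the inner integral over `|x| > κ` for each fixed `λ`.
If `|λ| > κ/2`, drop the restriction: the whole Cauchy kernel integrates to `π / (γ/2) = 2π/γ`.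
If `|λ| ≤ κ/2`, then `|x - λ| ≥ |x| - κ/2 > 0` on `|x| > κ`, and
`∫_{|x|>κ} (|x| - κ/2)⁻² dx = 2 · (κ/2)⁻¹ = 4/κ`.
-/

open MeasureTheory Set Filter ProbabilityTheory

lemma lintegral_ofReal_inv_sq_add_sq (l : ℝ) {c : ℝ} (hc : 0 < c) :
    ∫⁻ x, ENNReal.ofReal (((x - l) ^ 2 + c ^ 2)⁻¹) = ENNReal.ofReal (Real.pi / c) := by
  lift c to NNReal using hc.le
  have hpdf (x : ℝ) : ENNReal.ofReal (((x - l) ^ 2 + c ^ 2)⁻¹) =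
      ENNReal.ofReal (Real.pi / c) * cauchyPDF l c x := by
    rw [cauchyPDF_def, cauchyPDFReal_def, ← ENNReal.ofReal_mul (by positivity)]
    field_simp
  simp_rw [hpdf]
  rw [lintegral_const_mul _ (measurable_cauchyPDF l c),
    lintegral_cauchyPDF_eq_one l (by exact_mod_cast hc.ne'), mul_one]

lemma lintegral_Ioi_ofReal_inv_sub_sq {a b : ℝ} (hab : a < b) :
    ∫⁻ x in Ioi b, ENNReal.ofReal (((x - a) ^ 2)⁻¹) = ENNReal.ofReal ((b - a)⁻¹) := by
  have hderiv : ∀ x ∈ Ici b, HasDerivAt (fun y ↦ -(y - a)⁻¹) ((x - a) ^ 2)⁻¹ x := by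
    intro x hx
    have hxa : x - a ≠ 0 := by linarith [mem_Ici.mp hx]
    have h : HasDerivAt (fun y ↦ -(y - a)⁻¹) (-(-1 / (x - a) ^ 2)) x :=
      (((hasDerivAt_id x).sub_const a).inv hxa).neg
    rwa [neg_div, neg_neg, one_div] at h
  have hpos : ∀ x ∈ Ioi b, 0 ≤ ((x - a) ^ 2)⁻¹ := fun x _ ↦ by positivity
  have hlim : Tendsto (fun y ↦ -(y - a)⁻¹) atTop (nhds 0) := by
    simpa [← sub_eq_add_neg] using
      (tendsto_inv_atTop_zero.comp (tendsto_atTop_add_const_right _ (-a) tendsto_id)).neg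
  rw [← ofReal_integral_eq_lintegral_ofReal (integrableOn_Ioi_deriv_of_nonneg' hderiv hpos hlim)
    (ae_restrict_of_forall_mem measurableSet_Ioi hpos),
    integral_Ioi_of_hasDerivAt_of_nonneg' hderiv hpos hlim]
  simp

lemma setLIntegral_lt_abs_comp_abs (f : ℝ → ENNReal) {c : ℝ} (hc : 0 ≤ c) :
    ∫⁻ x in {x | c < |x|}, f |x| = 2 * ∫⁻ x in Ioi c, f x := by
  have hsplit : {x : ℝ | c < |x|} = Iio (-c) ∪ Ioi c := by
    ext x
    simp only [mem_ofPred_eq, mem_union, mem_Iio, mem_Ioi, lt_abs, lt_neg]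
    tauto
  have hIoi : ∫⁻ x in Ioi c, f |x| = ∫⁻ x in Ioi c, f x :=
    setLIntegral_congr_fun measurableSet_Ioi fun x hx ↦ by rw [abs_of_pos (hc.trans_lt hx)]
  have hIio : ∫⁻ x in Iio (-c), f |x| = ∫⁻ x in Ioi c, f |x| := by
    have := (Measure.measurePreserving_neg (volume : Measure ℝ)).setLIntegral_comp_preimage_emb
      measurableEmbedding_neg (fun x ↦ f |x|) (Ioi c)
    simpa only [abs_neg, neg_preimage, neg_Ioi] using this
  rw [hsplit, lintegral_union measurableSet_Ioi (Ioi_disjoint_Iio_of_le (by linarith)).symm, hIio,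
    hIoi, two_mul]

lemma inv_sq_add_le_inv_sq_abs_sub {x l a c : ℝ} (hl : |l| ≤ a) (hx : a < |x|) (hc : 0 ≤ c) :
    ((x - l) ^ 2 + c)⁻¹ ≤ ((|x| - a) ^ 2)⁻¹ := by
  have hxa : 0 < |x| - a := sub_pos.mpr hx
  have hdist : |x| - a ≤ |x - l| := by linarith [abs_sub_abs_le_abs_sub x l]
  have hsq : (|x| - a) ^ 2 ≤ (x - l) ^ 2 := by
    rw [← sq_abs (x - l)]
    exact pow_le_pow_left₀ hxa.le hdist 2
  exact inv_anti₀ (by positivity) (by linarith)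

lemma setLIntegral_lt_abs_inv_sq_add_le {κ a l c : ℝ} (hl : |l| ≤ a) (haκ : a < κ) (hc : 0 ≤ c) :
    ∫⁻ x in {x | κ < |x|}, ENNReal.ofReal (((x - l) ^ 2 + c)⁻¹) ≤
      ENNReal.ofReal (2 / (κ - a)) := by
  have ha : 0 ≤ a := (abs_nonneg l).trans hl
  calc ∫⁻ x in {x | κ < |x|}, ENNReal.ofReal (((x - l) ^ 2 + c)⁻¹)
      ≤ ∫⁻ x in {x | κ < |x|}, ENNReal.ofReal (((|x| - a) ^ 2)⁻¹) :=
        setLIntegral_mono (by fun_prop) fun x hx ↦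
          ENNReal.ofReal_le_ofReal (inv_sq_add_le_inv_sq_abs_sub hl (haκ.trans hx) hc)
    _ = 2 * ENNReal.ofReal ((κ - a)⁻¹) := by
        rw [setLIntegral_lt_abs_comp_abs (fun y ↦ ENNReal.ofReal (((y - a) ^ 2)⁻¹)) (ha.trans haκ.le),
          lintegral_Ioi_ofReal_inv_sub_sq haκ]
    _ = ENNReal.ofReal (2 / (κ - a)) := by
        rw [div_eq_mul_inv, ENNReal.ofReal_mul zero_le_two, ENNReal.ofReal_ofNat]

lemma setLIntegral_lt_abs_inv_sq_add_sq_le (l : ℝ) {κ c : ℝ} (hκ : 0 < κ) (hc : 0 < c) :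
    ∫⁻ x in {x | κ < |x|}, ENNReal.ofReal (((x - l) ^ 2 + c ^ 2)⁻¹) ≤
      ENNReal.ofReal (4 / κ) +
        {l : ℝ | κ / 2 < |l|}.indicator (fun _ ↦ ENNReal.ofReal (Real.pi / c)) l := by
  by_cases hl : κ / 2 < |l|
  · rw [indicator_of_mem (s := {l : ℝ | κ / 2 < |l|}) hl, ← lintegral_ofReal_inv_sq_add_sq l hc]
    exact (setLIntegral_le_lintegral _ _).trans le_add_self
  · rw [indicator_of_notMem (s := {l : ℝ | κ / 2 < |l|}) hl, add_zero]
    convert setLIntegral_lt_abs_inv_sq_add_le (not_lt.mp hl) (half_lt_self hκ) (sq_nonneg c)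
      using 2
    field_simp
    norm_num

/-- Tail bound: for a probability measure `μ`, `γ > 0` and `κ > γ`,
`∫_{|x|>κ} ∫ ((x − λ)² + γ²/4)⁻¹ dμ(λ) dx ≤ 4/κ + (3π/γ) μ({|λ| > κ/2})`. -/
theorem tail_integral_bound (μ : Measure ℝ) [IsProbabilityMeasure μ]
    (γ κ : ℝ) (hγ : 0 < γ) (hκ : γ < κ) :
    ∫⁻ x in {x : ℝ | κ < |x|},
        (∫⁻ l, ENNReal.ofReal (((x - l) ^ 2 + γ ^ 2 / 4)⁻¹) ∂μ) ≤
      ENNReal.ofReal (4 / κ) + ENNReal.ofReal (3 * Real.pi / γ) * μ {l : ℝ | κ / 2 < |l|} := by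
  have hscale : γ ^ 2 / 4 = (γ / 2) ^ 2 := by ring
  have hT : MeasurableSet {l : ℝ | κ / 2 < |l|} := measurableSet_lt measurable_const measurable_abs
  rw [lintegral_lintegral_swap (by fun_prop)]
  calc _ ≤ ∫⁻ l, (ENNReal.ofReal (4 / κ) +
          {l : ℝ | κ / 2 < |l|}.indicator (fun _ ↦ ENNReal.ofReal (Real.pi / (γ / 2))) l) ∂μ :=
        lintegral_mono fun l ↦ hscale ▸
          setLIntegral_lt_abs_inv_sq_add_sq_le l (hγ.trans hκ) (half_pos hγ)
    _ = ENNReal.ofReal (4 / κ) + ENNReal.ofReal (Real.pi / (γ / 2)) * μ {l : ℝ | κ / 2 < |l|} := by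
        rw [lintegral_add_left (by fun_prop), lintegral_const, measure_univ, mul_one,
          lintegral_indicator hT, setLIntegral_const]
    _ ≤ _ := by
        gcongr ENNReal.ofReal (4 / κ) + ENNReal.ofReal ?_ * _
        rw [div_div_eq_mul_div]
        exact div_le_div_of_nonneg_right (by linarith [Real.pi_pos]) hγ.le
end
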